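/- Let n ∈ ℕ, let E and E' be linear subspaces of ℝ^n, and let f : ℝ^n → ℝ be c-Lipschitz. Then ∫ |(A_E f)(x) − (A_{E'} f)(x)| dγ_n(x) ≤ √2 · c · ‖Π_E − Π_{E'}‖_F, where Π_E and Π_{E'} are viewed as n×n matrices and ‖·‖_F is the Frobenius norm. -/

import Mathlib

open MeasureTheory

/-- The standard Gaussian measure `γ_n` on `ℝ^n`: the product of `n` i.i.d. standard
Gaussians `N(0,1)`, transported to `EuclideanSpace ℝ (Fin n)`. -/
noncomputable def stdGaussian (n : ℕ) : Measure (EuclideanSpace ℝ (Fin n)) :=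
  (Measure.pi fun _ : Fin n => ProbabilityTheory.gaussianReal 0 1).map
    (MeasurableEquiv.toLp 2 (Fin n → ℝ))

/-- The orthogonal projection `Π_E` onto a subspace `E`, as a map of the ambient space. -/
noncomputable def proj {n : ℕ} (E : Submodule ℝ (EuclideanSpace ℝ (Fin n)))
    (x : EuclideanSpace ℝ (Fin n)) : EuclideanSpace ℝ (Fin n) :=
  (E.orthogonalProjectionOnto x : EuclideanSpace ℝ (Fin n))

/-- The averaging operator `A_E`: `(A_E f)(x) = ∫ f(Π_E x + Π_{E^⊥} z) dγ_n(z)`. -/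
noncomputable def avg {n : ℕ} (E : Submodule ℝ (EuclideanSpace ℝ (Fin n)))
    (f : EuclideanSpace ℝ (Fin n) → ℝ) (x : EuclideanSpace ℝ (Fin n)) : ℝ :=
  ∫ z, f (proj E x + proj Eᗮ z) ∂(stdGaussian n)

/-- The Ornstein–Uhlenbeck noise operator `P_t`:
`(P_t f)(x) = ∫ f(e^{-t} x + √(1 - e^{-2t}) y) dγ_n(y)`. -/
noncomputable def ouOp {n : ℕ} (t : ℝ) (f : EuclideanSpace ℝ (Fin n) → ℝ)
    (x : EuclideanSpace ℝ (Fin n)) : ℝ :=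
  ∫ y, f (Real.exp (-t) • x + Real.sqrt (1 - Real.exp (-2 * t)) • y) ∂(stdGaussian n)

/-- A function `f : ℝ^n → [-1,1]` is `s`-smooth if `∫ |f - P_t f| dγ_n ≤ s·√t` for all `t > 0`. -/
def SSmooth {n : ℕ} (s : ℝ) (f : EuclideanSpace ℝ (Fin n) → ℝ) : Prop :=
  ∀ t : ℝ, 0 < t → ∫ x, |f x - ouOp t f x| ∂(stdGaussian n) ≤ s * Real.sqrt t

/-- `f` is `c`-Lipschitz (with a real constant `c`). -/
def LipschitzC {E : Type*} [NormedAddCommGroup E] (c : ℝ) (f : E → ℝ) : Prop :=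
  ∀ x y, |f x - f y| ≤ c * ‖x - y‖

/-- `h : ℝ^n → ℝ` is a linear `k`-junta: it depends only on the projection onto a
subspace of dimension at most `k`. -/
def IsLinearJunta {n : ℕ} (k : ℕ) (h : EuclideanSpace ℝ (Fin n) → ℝ) : Prop :=
  ∃ F : Submodule ℝ (EuclideanSpace ℝ (Fin n)), Module.finrank ℝ F ≤ k ∧
    ∀ x z, proj F x = proj F z → h x = h z

/-- Frobenius norm of a matrix. -/
noncomputable def frobNorm {m n : ℕ} (M : Matrix (Fin m) (Fin n) ℝ) : ℝ :=
  Real.sqrt (∑ i, ∑ j, (M i j) ^ 2)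

/-- Operator (spectral) norm of a matrix. -/
noncomputable def specNorm {m n : ℕ} (M : Matrix (Fin m) (Fin n) ℝ) : ℝ :=
  ‖LinearMap.toContinuousLinearMap (Matrix.toEuclideanLin M)‖

/-- The `n×n` matrix of the orthogonal projection onto `E`. -/
noncomputable def projMatrix {n : ℕ} (E : Submodule ℝ (EuclideanSpace ℝ (Fin n))) :
    Matrix (Fin n) (Fin n) ℝ :=
  Matrix.of fun i j => proj E (EuclideanSpace.single j (1 : ℝ)) i

/-- View a vector of `ℝ^n` as a plain function `Fin n → ℝ`. -/
noncomputable def toPi {n : ℕ} (x : EuclideanSpace ℝ (Fin n)) : Fin n → ℝ := fun i => x i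

/-- View a plain function `Fin n → ℝ` as a vector of `ℝ^n`. -/
noncomputable def ofPi {n : ℕ} (v : Fin n → ℝ) : EuclideanSpace ℝ (Fin n) :=
  (EuclideanSpace.equiv (Fin n) ℝ).symm v

/-!
The two points averaged in `A_E f x` and `A_{E'} f x` differ by `P (x - z)`, where
`P = Π_E - Π_{E'}`, so the Lipschitz bound gives
`∫ |A_E f - A_{E'} f| dγ ≤ c 𝔼 ‖P (X - Z)‖` for independent standard Gaussians `X, Z`.
By Cauchy–Schwarz this is at most `c (𝔼 ‖P (X - Z)‖²)^{1/2}`; expanding the square, the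
cross term vanishes because `Z` is centred, and `𝔼 ‖P X‖² = ∑ᵢ ‖P† eᵢ‖² = ‖P‖_F²`
since `𝔼 ⟪v, X⟫² = ‖v‖²`.
-/

open scoped RealInnerProductSpace

lemma stdGaussian_eq_stdGaussian_euclideanSpace (n : ℕ) :
    stdGaussian n = ProbabilityTheory.stdGaussian (EuclideanSpace ℝ (Fin n)) :=
  ProbabilityTheory.map_pi_eq_stdGaussian

instance (n : ℕ) : ProbabilityTheory.IsGaussian (stdGaussian n) := by
  rw [stdGaussian_eq_stdGaussian_euclideanSpace]
  infer_instance

open ProbabilityTheory in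
lemma sq_integral_le_integral_sq {Ω : Type*} {mΩ : MeasurableSpace Ω} {μ : Measure Ω}
    [IsProbabilityMeasure μ] {X : Ω → ℝ} (hX : MemLp X 2 μ) :
    (∫ ω, X ω ∂μ) ^ 2 ≤ ∫ ω, X ω ^ 2 ∂μ := by
  have := variance_nonneg X μ
  rw [variance_eq_sub hX] at this
  simpa [sub_nonneg] using this

section Gaussian

-- Until `end Gaussian`, `stdGaussian E` is Mathlib's `ProbabilityTheory.stdGaussian` on the space `E`.
open ProbabilityTheory

variable {E F : Type*} [NormedAddCommGroup E] [InnerProductSpace ℝ E] [FiniteDimensional ℝ E]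
  [MeasurableSpace E] [BorelSpace E] [NormedAddCommGroup F] [InnerProductSpace ℝ F]

lemma integral_inner_sq_stdGaussian (v : E) : ∫ x, ⟪v, x⟫ ^ 2 ∂stdGaussian E = ‖v‖ ^ 2 := by
  have h := covarianceBilin_apply (IsGaussian.memLp_two_id (μ := stdGaussian E)) v v
  rw [covarianceBilin_stdGaussian, innerSL_apply_apply, real_inner_self_eq_norm_sq] at h
  simpa [sq] using h.symm

lemma integral_inner_comp_stdGaussian (T : E →L[ℝ] F) (a : F) :
    ∫ z, ⟪a, T z⟫ ∂stdGaussian E = 0 :=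
  integral_strongDual_stdGaussian ((innerSL ℝ a).comp T)

lemma integral_norm_sq_comp_stdGaussian [CompleteSpace F] {ι : Type*} [Fintype ι]
    (b : OrthonormalBasis ι ℝ F) (T : E →L[ℝ] F) :
    ∫ x, ‖T x‖ ^ 2 ∂stdGaussian E = ∑ i, ‖T.adjoint (b i)‖ ^ 2 := by
  have h (x : E) : ‖T x‖ ^ 2 = ∑ i, ⟪T.adjoint (b i), x⟫ ^ 2 := by
    simp_rw [ContinuousLinearMap.adjoint_inner_left, b.sum_sq_inner_right]
  simp_rw [h]
  rw [integral_finsetSum _ fun i _ => ?_]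
  · simp_rw [integral_inner_sq_stdGaussian]
  exact (IsGaussian.memLp_two_id.continuousLinearMap_comp
    (innerSL ℝ (T.adjoint (b i)))).integrable_sq

lemma integrable_norm_comp_sq_stdGaussian (T : E →L[ℝ] F) :
    Integrable (fun x => ‖T x‖ ^ 2) (stdGaussian E) :=
  (IsGaussian.memLp_two_id.continuousLinearMap_comp T).integrable_norm_pow'

lemma integral_norm_comp_sub_sq_stdGaussian (T : E →L[ℝ] F) (x : E) :
    ∫ z, ‖T (x - z)‖ ^ 2 ∂stdGaussian E = ‖T x‖ ^ 2 + ∫ z, ‖T z‖ ^ 2 ∂stdGaussian E := by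
  have hcross : Integrable (fun z => 2 * ⟪T x, T z⟫) (stdGaussian E) :=
    (((innerSL ℝ (T x)).comp T).integrable_comp IsGaussian.integrable_id).const_mul 2
  simp_rw [map_sub, norm_sub_sq_real]
  rw [integral_add ((integrable_const _).sub' hcross) (integrable_norm_comp_sq_stdGaussian T),
    integral_sub (integrable_const _) hcross, integral_const_mul,
    integral_inner_comp_stdGaussian]
  simp

lemma memLp_two_comp_sub_prod_stdGaussian (T : E →L[ℝ] F) :
    MemLp (fun p : E × E => T (p.1 - p.2)) 2 ((stdGaussian E).prod (stdGaussian E)) :=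
  IsGaussian.memLp_two_id.continuousLinearMap_comp
    (T ∘L (ContinuousLinearMap.fst ℝ E E - ContinuousLinearMap.snd ℝ E E))

lemma integral_prod_norm_comp_sub_sq_stdGaussian (T : E →L[ℝ] F) :
    ∫ p, ‖T (p.1 - p.2)‖ ^ 2 ∂(stdGaussian E).prod (stdGaussian E)
      = 2 * ∫ x, ‖T x‖ ^ 2 ∂stdGaussian E := by
  rw [integral_prod _ (memLp_two_comp_sub_prod_stdGaussian T).integrable_norm_pow']
  simp_rw [integral_norm_comp_sub_sq_stdGaussian]
  rw [integral_add (integrable_norm_comp_sq_stdGaussian T) (integrable_const _)]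
  simp [two_mul]

lemma integral_prod_norm_comp_sub_le_stdGaussian (T : E →L[ℝ] F) :
    ∫ p, ‖T (p.1 - p.2)‖ ∂(stdGaussian E).prod (stdGaussian E)
      ≤ √(2 * ∫ x, ‖T x‖ ^ 2 ∂stdGaussian E) := by
  rw [← integral_prod_norm_comp_sub_sq_stdGaussian]
  exact Real.le_sqrt_of_sq_le
    (sq_integral_le_integral_sq (memLp_two_comp_sub_prod_stdGaussian T).norm)

end Gaussian

lemma integral_norm_sq_comp_stdGaussian_eq_sum_sq {ι κ : Type*} [Fintype ι] [DecidableEq ι]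
    [Fintype κ] [DecidableEq κ] (T : EuclideanSpace ℝ ι →L[ℝ] EuclideanSpace ℝ κ) :
    ∫ x, ‖T x‖ ^ 2 ∂ProbabilityTheory.stdGaussian (EuclideanSpace ℝ ι)
      = ∑ k, ∑ i, (T (EuclideanSpace.single i 1) k) ^ 2 := by
  rw [integral_norm_sq_comp_stdGaussian (EuclideanSpace.basisFun κ ℝ)]
  refine Finset.sum_congr rfl fun k _ => ?_
  rw [EuclideanSpace.real_norm_sq_eq]
  refine Finset.sum_congr rfl fun i _ => ?_
  have := T.adjoint_inner_right (EuclideanSpace.single i 1) (EuclideanSpace.single k 1)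
  simp only [EuclideanSpace.inner_single_left, EuclideanSpace.inner_single_right, map_one,
    one_mul, conj_trivial] at this
  rw [EuclideanSpace.basisFun_apply, this]

section Lipschitz

variable {V : Type*} [NormedAddCommGroup V] {c : ℝ} {f : V → ℝ}

lemma LipschitzC.nonneg [Nontrivial V] (hf : LipschitzC c f) : 0 ≤ c := by
  obtain ⟨x, y, hxy⟩ := exists_pair_ne V
  have := (abs_nonneg _).trans (hf x y)
  exact (mul_nonneg_iff_of_pos_right (norm_pos_iff.2 (sub_ne_zero.2 hxy))).1 this

lemma LipschitzC.lipschitzWith (hf : LipschitzC c f) : LipschitzWith c.toNNReal f :=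
  LipschitzWith.of_dist_le_mul fun x y => by
    rw [Real.dist_eq, dist_eq_norm]
    exact (hf x y).trans (mul_le_mul_of_nonneg_right (Real.le_coe_toNNReal c) (norm_nonneg _))

end Lipschitz

lemma LipschitzWith.integrable_comp {α V : Type*} {mα : MeasurableSpace α} {μ : Measure α}
    [IsFiniteMeasure μ] [NormedAddCommGroup V] {K : NNReal} {f : V → ℝ}
    (hf : LipschitzWith K f) {g : α → V} (hg : Integrable g μ) :
    Integrable (fun a => f (g a)) μ := by
  refine ((integrable_const ‖f 0‖).add (hg.norm.const_mul K)).mono'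
    (hf.continuous.comp_aestronglyMeasurable hg.1) (ae_of_all _ fun a => ?_)
  have hfg : ‖f (g a) - f 0‖ ≤ K * ‖g a‖ := by simpa using hf.norm_sub_le (g a) 0
  simp only [Pi.add_apply]
  linarith [norm_sub_norm_le (f (g a)) (f 0)]

section Averaging

variable {n : ℕ} (E E' : Submodule ℝ (EuclideanSpace ℝ (Fin n)))

lemma proj_add_proj_orthogonal_sub (x z : EuclideanSpace ℝ (Fin n)) :
    (proj E x + proj Eᗮ z) - (proj E' x + proj E'ᗮ z)
      = (E.starProjection - E'.starProjection) (x - z) := by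
  simp only [proj, ← Submodule.starProjection_apply, Submodule.starProjection_orthogonal_val,
    sub_apply, map_sub]
  abel

lemma abs_avg_sub_avg_le {c : ℝ} {f : EuclideanSpace ℝ (Fin n) → ℝ} (hf : LipschitzC c f)
    (x : EuclideanSpace ℝ (Fin n)) :
    |avg E f x - avg E' f x|
      ≤ c * ∫ z, ‖(E.starProjection - E'.starProjection) (x - z)‖ ∂stdGaussian n := by
  have hint (G : Submodule ℝ (EuclideanSpace ℝ (Fin n))) :
      Integrable (fun z => f (proj G x + proj Gᗮ z)) (stdGaussian n) :=
    hf.lipschitzWith.integrable_comp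
      ((integrable_const _).add ((Gᗮ : Submodule ℝ _).starProjection.integrable_comp
        ProbabilityTheory.IsGaussian.integrable_id))
  have hbound : Integrable (fun z => ‖(E.starProjection - E'.starProjection) (x - z)‖)
      (stdGaussian n) :=
    ((E.starProjection - E'.starProjection).integrable_comp
      ((integrable_const x).sub' ProbabilityTheory.IsGaussian.integrable_id)).norm
  rw [avg, avg, ← integral_sub (hint E) (hint E'), ← Real.norm_eq_abs, ← integral_const_mul]
  refine norm_integral_le_of_norm_le (hbound.const_mul c) (ae_of_all _ fun z => ?_)
  rw [Real.norm_eq_abs, ← proj_add_proj_orthogonal_sub]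
  exact hf _ _

end Averaging

/-- `∫ |A_E f − A_{E'} f| dγ_n ≤ √2 · c · ‖Π_E − Π_{E'}‖_F` for
`c`-Lipschitz `f`. -/
theorem distance_between_averages {n : ℕ} (c : ℝ)
    (E E' : Submodule ℝ (EuclideanSpace ℝ (Fin n)))
    (f : EuclideanSpace ℝ (Fin n) → ℝ) (hf : LipschitzC c f) :
    ∫ x, |avg E f x - avg E' f x| ∂(stdGaussian n)
      ≤ Real.sqrt 2 * c * frobNorm (projMatrix E - projMatrix E') := by
  -- in dimension `0` the Lipschitz hypothesis does not force `0 ≤ c`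
  rcases n.eq_zero_or_pos with rfl | hn
  · have (x : EuclideanSpace ℝ (Fin 0)) : avg E f x = avg E' f x := by
      simp only [avg]
      congr! 3
      exact Subsingleton.elim _ _
    simp [this, frobNorm]
  have : NeZero n := ⟨hn.ne'⟩
  set P := E.starProjection - E'.starProjection
  have hint :
      Integrable (fun p => ‖P (p.1 - p.2)‖) ((stdGaussian n).prod (stdGaussian n)) := by
    rw [stdGaussian_eq_stdGaussian_euclideanSpace]
    exact ((memLp_two_comp_sub_prod_stdGaussian P).integrable one_le_two).norm
  calc ∫ x, |avg E f x - avg E' f x| ∂stdGaussian n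
      ≤ ∫ x, c * ∫ z, ‖P (x - z)‖ ∂stdGaussian n ∂stdGaussian n :=
        integral_mono_of_nonneg (ae_of_all _ fun _ => abs_nonneg _)
          (hint.integral_prod_left.const_mul c) (ae_of_all _ (abs_avg_sub_avg_le E E' hf))
    _ = c * ∫ p, ‖P (p.1 - p.2)‖ ∂(stdGaussian n).prod (stdGaussian n) := by
        rw [integral_const_mul, integral_integral (f := fun x z => ‖P (x - z)‖) hint]
    _ ≤ c * √(2 * ∫ x, ‖P x‖ ^ 2 ∂stdGaussian n) := by
        gcongr
        · exact hf.nonneg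
        rw [stdGaussian_eq_stdGaussian_euclideanSpace]
        exact integral_prod_norm_comp_sub_le_stdGaussian P
    _ = √2 * c * frobNorm (projMatrix E - projMatrix E') := by
        rw [stdGaussian_eq_stdGaussian_euclideanSpace, integral_norm_sq_comp_stdGaussian_eq_sum_sq,
          Real.sqrt_mul zero_le_two, mul_left_comm, ← mul_assoc]
        rfl
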